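/- arXiv:1601.04093 — 2 statements merged into one kernel-verified Lean document; each statement's English description precedes it below -/
import Mathlib

section
/- Let N ≥ 2, σ_k > 0 for k = 1,…,N−1, and suppose α, α' : Fin N → ℝ both satisfy the stability condition (all partial sums up to N−1 negative) with α'_j ≤ α_j for all j and α'_j < α_j for at least one j ≤ K (for some K < N−1). Let θ and θ' be the unique normalized decreasing share vectors with log θ_k − log θ_{k+1} = σ_k²/(−4∑_{j≤k} α_j) and similarly for θ' with α'. Then for every k ≤ K the log-gap under α' is weakly smaller: σ_k²/(−4∑_{j≤k} α'_j) ≤ σ_k²/(−4∑_{j≤k} α_j), with strict inequality for k with ∑_{j≤k} α'_j < ∑_{j≤k} α_j; consequently θ'_1 < θ_1. -/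
/-!
Lowering `α` can only make the partial sums `∑_{j≤k} α_j` more negative, so every log-gap
`σ_k²/(−4∑_{j≤k} α_j)` shrinks, strictly at `k = K`. Telescoping, `log θ_1 − log θ_i` is the sum
of the first gaps, so every relative share `θ_i/θ_1` weakly grows under `α'`, strictly at `i = K+1`.
Since `∑ θ_i/θ_1 = 1/θ_1`, the top share must fall.
-/

/-- Partial sum of the first `k` values of `α` (0-based indices `0,…,k-1`). -/
noncomputable def psum {N : ℕ} (α : Fin N → ℝ) (k : ℕ) : ℝ :=
  ∑ j ∈ Finset.univ.filter (fun j : Fin N => (j : ℕ) < k), α j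

open Finset

/-- The log-gap `log θ_k − log θ_{k+1}` of the stable distribution of Theorem 1. -/
noncomputable def logGap (σ : ℕ → ℝ) {N : ℕ} (α : Fin N → ℝ) (k : ℕ) : ℝ :=
  σ k ^ 2 / (-4 * psum α k)

section

variable {N : ℕ} {α α' : Fin N → ℝ}

theorem psum_le_psum (hle : ∀ j, α' j ≤ α j) (k : ℕ) : psum α' k ≤ psum α k :=
  sum_le_sum fun j _ => hle j

theorem psum_lt_psum (hle : ∀ j, α' j ≤ α j) {k : ℕ} {j : Fin N} (hjk : (j : ℕ) < k)
    (hlt : α' j < α j) : psum α' k < psum α k :=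
  sum_lt_sum (fun i _ => hle i) ⟨j, by simpa using hjk, hlt⟩

theorem logGap_le_logGap (σ : ℕ → ℝ) {k : ℕ} (hneg : psum α k < 0)
    (hle : psum α' k ≤ psum α k) : logGap σ α' k ≤ logGap σ α k :=
  div_le_div_of_nonneg_left (sq_nonneg _) (by linarith) (by linarith)

theorem logGap_lt_logGap {σ : ℕ → ℝ} {k : ℕ} (hσ : 0 < σ k) (hneg : psum α k < 0)
    (hlt : psum α' k < psum α k) : logGap σ α' k < logGap σ α k :=
  div_lt_div_of_pos_left (pow_pos hσ 2) (by linarith) (by linarith)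

end

theorem Fin.sub_eq_sum_Icc_of_sub_pred {M : Type*} [AddCommGroup M] {N : ℕ} (f : Fin N → M)
    (g : ℕ → M)
    (hg : ∀ k : ℕ, ∀ h1 : 1 ≤ k, ∀ h2 : k ≤ N - 1, f ⟨k - 1, by omega⟩ - f ⟨k, by omega⟩ = g k)
    (k : ℕ) (hk : k < N) : f ⟨0, by omega⟩ - f ⟨k, hk⟩ = ∑ m ∈ Icc 1 k, g m := by
  induction k with
  | zero => simp
  | succ k ih =>
    rw [sum_Icc_succ_top (by omega), ← ih (by omega), ← hg (k + 1) (by omega) (by omega)]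
    exact (sub_add_sub_cancel _ _ _).symm

theorem div_le_div_iff_log_sub_le_log_sub {a b c d : ℝ} (ha : 0 < a) (hb : 0 < b) (hc : 0 < c)
    (hd : 0 < d) : a / b ≤ c / d ↔ Real.log d - Real.log c ≤ Real.log b - Real.log a := by
  rw [← Real.log_le_log_iff (div_pos ha hb) (div_pos hc hd), Real.log_div ha.ne' hb.ne',
    Real.log_div hc.ne' hd.ne']
  constructor <;> intro h <;> linarith

theorem div_lt_div_iff_log_sub_lt_log_sub {a b c d : ℝ} (ha : 0 < a) (hb : 0 < b) (hc : 0 < c)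
    (hd : 0 < d) : a / b < c / d ↔ Real.log d - Real.log c < Real.log b - Real.log a := by
  rw [← Real.log_lt_log_iff (div_pos ha hb) (div_pos hc hd), Real.log_div ha.ne' hb.ne',
    Real.log_div hc.ne' hd.ne']
  constructor <;> intro h <;> linarith

theorem lt_of_forall_div_le_div_of_sum_eq_one {ι : Type*} [Fintype ι] {θ θ' : ι → ℝ} {i₀ : ι}
    (h₀ : 0 < θ i₀) (h₀' : 0 < θ' i₀) (hsum : ∑ i, θ i = 1) (hsum' : ∑ i, θ' i = 1)
    (hle : ∀ i, θ i / θ i₀ ≤ θ' i / θ' i₀) (hlt : ∃ i, θ i / θ i₀ < θ' i / θ' i₀) :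
    θ' i₀ < θ i₀ := by
  obtain ⟨i, hi⟩ := hlt
  have hrel : ∑ i, θ i / θ i₀ < ∑ i, θ' i / θ' i₀ :=
    sum_lt_sum (fun i _ => hle i) ⟨i, mem_univ i, hi⟩
  rwa [← sum_div, ← sum_div, hsum, hsum', div_lt_div_iff₀ h₀ h₀', one_mul, one_mul] at hrel

/-- Comparative statics of a progressive capital tax: lowering the relative growth rates
of top-ranked households (`α'_j ≤ α_j` everywhere, strictly for some `j` among the top `K`
ranks) weakly shrinks every top log-gap `σ_k²/(−4∑_{j≤k} α_j)` (strictly where the partial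
sums differ), and hence strictly lowers the top share: `θ'_1 < θ_1`. -/
theorem stmt15 (N : ℕ) (hN : 2 ≤ N) (σ : ℕ → ℝ)
    (hσ : ∀ k, 1 ≤ k → k ≤ N - 1 → 0 < σ k)
    (α α' : Fin N → ℝ)
    (hstab : ∀ k, 1 ≤ k → k ≤ N - 1 → psum α k < 0)
    (hle : ∀ j, α' j ≤ α j)
    (K : ℕ) (hK1 : 1 ≤ K) (hK : K < N - 1)
    (hstrict : ∃ j : Fin N, (j : ℕ) + 1 ≤ K ∧ α' j < α j)
    (θ θ' : Fin N → ℝ)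
    (hθpos : ∀ k, 0 < θ k) (hθ'pos : ∀ k, 0 < θ' k)
    (hθsum : ∑ k, θ k = 1) (hθ'sum : ∑ k, θ' k = 1)
    (hθgap : ∀ k : ℕ, ∀ h1 : 1 ≤ k, ∀ h2 : k ≤ N - 1,
      Real.log (θ ⟨k - 1, by omega⟩) - Real.log (θ ⟨k, by omega⟩) =
        σ k ^ 2 / (-4 * psum α k))
    (hθ'gap : ∀ k : ℕ, ∀ h1 : 1 ≤ k, ∀ h2 : k ≤ N - 1,
      Real.log (θ' ⟨k - 1, by omega⟩) - Real.log (θ' ⟨k, by omega⟩) =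
        σ k ^ 2 / (-4 * psum α' k)) :
    (∀ k, 1 ≤ k → k ≤ K →
      σ k ^ 2 / (-4 * psum α' k) ≤ σ k ^ 2 / (-4 * psum α k) ∧
      (psum α' k < psum α k →
        σ k ^ 2 / (-4 * psum α' k) < σ k ^ 2 / (-4 * psum α k))) ∧
    θ' ⟨0, by omega⟩ < θ ⟨0, by omega⟩ := by
  have hgap : ∀ k ∈ Icc 1 (N - 1), logGap σ α' k ≤ logGap σ α k := fun k hk =>
    have hk := mem_Icc.mp hk
    logGap_le_logGap σ (hstab k hk.1 hk.2) (psum_le_psum hle k)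
  have hgapK : logGap σ α' K < logGap σ α K := by
    obtain ⟨j, hjK, hj⟩ := hstrict
    exact logGap_lt_logGap (hσ K hK1 hK.le) (hstab K hK1 hK.le) (psum_lt_psum hle (by omega) hj)
  refine ⟨fun k h1 h2 => ⟨hgap k (mem_Icc.mpr ⟨h1, by omega⟩), fun hlt =>
    logGap_lt_logGap (hσ k h1 (by omega)) (hstab k h1 (by omega)) hlt⟩, ?_⟩
  have hcum := Fin.sub_eq_sum_Icc_of_sub_pred (fun i => Real.log (θ i)) _ hθgap
  have hcum' := Fin.sub_eq_sum_Icc_of_sub_pred (fun i => Real.log (θ' i)) _ hθ'gap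
  refine lt_of_forall_div_le_div_of_sum_eq_one (hθpos _) (hθ'pos _) hθsum hθ'sum
    (fun i => ?_) ⟨⟨K, by omega⟩, ?_⟩
  · rw [div_le_div_iff_log_sub_le_log_sub (hθpos _) (hθpos _) (hθ'pos _) (hθ'pos _)]
    simp only [hcum i i.2, hcum' i i.2]
    exact sum_le_sum fun k hk => hgap k (Icc_subset_Icc_right (by omega) hk)
  · rw [div_lt_div_iff_log_sub_lt_log_sub (hθpos _) (hθpos _) (hθ'pos _) (hθ'pos _)]
    simp only [hcum K (by omega), hcum' K (by omega)]
    exact sum_lt_sum (fun k hk => hgap k (Icc_subset_Icc_right hK.le hk))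
      ⟨K, mem_Icc.mpr ⟨hK1, le_rfl⟩, hgapK⟩
end

section
/- Let g, g' : Fin (N−1) → ℝ with 0 < g'_k ≤ g_k for all k and g'_k < g_k for some k. Let θ, θ' be the unique positive vectors summing to 1 with log θ_k − log θ_{k+1} = g_k and log θ'_k − log θ'_{k+1} = g'_k. Then θ'_1 < θ_1 and θ'_N > θ_N. -/
/-- Monotonicity of the normalized share vector in the gap sequence: if the positive
log-gaps satisfy `g'_k ≤ g_k` everywhere and `g'_k < g_k` somewhere, then the top share
strictly decreases and the bottom share strictly increases: `θ'_1 < θ_1`, `θ'_N > θ_N`. -/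
theorem stmt16 (N : ℕ) (hN : 2 ≤ N) (g g' : Fin (N - 1) → ℝ)
    (hg'pos : ∀ k, 0 < g' k) (hle : ∀ k, g' k ≤ g k) (hstrict : ∃ k, g' k < g k)
    (θ θ' : Fin N → ℝ)
    (hθpos : ∀ k, 0 < θ k) (hθ'pos : ∀ k, 0 < θ' k)
    (hθsum : ∑ k, θ k = 1) (hθ'sum : ∑ k, θ' k = 1)
    (hθgap : ∀ k : Fin (N - 1),
      Real.log (θ ⟨(k : ℕ), by have := k.isLt; omega⟩) -
        Real.log (θ ⟨(k : ℕ) + 1, by have := k.isLt; omega⟩) = g k)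
    (hθ'gap : ∀ k : Fin (N - 1),
      Real.log (θ' ⟨(k : ℕ), by have := k.isLt; omega⟩) -
        Real.log (θ' ⟨(k : ℕ) + 1, by have := k.isLt; omega⟩) = g' k) :
    θ' ⟨0, by omega⟩ < θ ⟨0, by omega⟩ ∧
    θ ⟨N - 1, by omega⟩ < θ' ⟨N - 1, by omega⟩ := by
  obtain ⟨k0, hk0⟩ := hstrict
  -- ratio step: r_j ≤ r_{j+1}, with strict inequality at k0
  have hstep : ∀ (j : ℕ) (hj : j + 1 < N),
      θ' ⟨j, by omega⟩ / θ ⟨j, by omega⟩ ≤ θ' ⟨j + 1, hj⟩ / θ ⟨j + 1, hj⟩ := by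
    intro j hj
    have hjlt : j < N - 1 := by omega
    have h1 := hθgap ⟨j, hjlt⟩
    have h2 := hθ'gap ⟨j, hjlt⟩
    have h3 := hle ⟨j, hjlt⟩
    have key : Real.log (θ' ⟨j, by omega⟩ / θ ⟨j, by omega⟩) ≤
        Real.log (θ' ⟨j + 1, hj⟩ / θ ⟨j + 1, hj⟩) := by
      rw [Real.log_div (hθ'pos _).ne' (hθpos _).ne',
        Real.log_div (hθ'pos _).ne' (hθpos _).ne']
      simp only at h1 h2
      linarith
    exact (Real.log_le_log_iff (div_pos (hθ'pos _) (hθpos _)) (div_pos (hθ'pos _) (hθpos _))).mp key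
  have hstepstrict : ∀ (j : ℕ) (hj : j + 1 < N) (hjlt : j < N - 1),
      g' ⟨j, hjlt⟩ < g ⟨j, hjlt⟩ →
      θ' ⟨j, by omega⟩ / θ ⟨j, by omega⟩ < θ' ⟨j + 1, hj⟩ / θ ⟨j + 1, hj⟩ := by
    intro j hj hjlt hgs
    have h1 := hθgap ⟨j, hjlt⟩
    have h2 := hθ'gap ⟨j, hjlt⟩
    have key : Real.log (θ' ⟨j, by omega⟩ / θ ⟨j, by omega⟩) <
        Real.log (θ' ⟨j + 1, hj⟩ / θ ⟨j + 1, hj⟩) := by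
      rw [Real.log_div (hθ'pos _).ne' (hθpos _).ne',
        Real.log_div (hθ'pos _).ne' (hθpos _).ne']
      simp only at h1 h2
      linarith
    exact (Real.log_lt_log_iff (div_pos (hθ'pos _) (hθpos _)) (div_pos (hθ'pos _) (hθpos _))).mp key
  -- monotonicity of the ratio
  have hmono : ∀ (m j : ℕ) (hm : m < N) (hj : j < N), j ≤ m →
      θ' ⟨j, hj⟩ / θ ⟨j, hj⟩ ≤ θ' ⟨m, hm⟩ / θ ⟨m, hm⟩ := by
    intro m
    induction m with
    | zero =>
      intro j hm hj hjm
      have : j = 0 := by omega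
      subst this; rfl
    | succ m ih =>
      intro j hm hj hjm
      rcases Nat.lt_or_ge j (m + 1) with h | h
      · exact le_trans (ih j (by omega) hj (by omega)) (hstep m hm)
      · have : j = m + 1 := by omega
        subst this; rfl
  have hk0lt : (k0 : ℕ) < N - 1 := k0.isLt
  have hk0N : (k0 : ℕ) + 1 < N := by omega
  have hk0strict : θ' ⟨(k0 : ℕ), by omega⟩ / θ ⟨(k0 : ℕ), by omega⟩ <
      θ' ⟨(k0 : ℕ) + 1, hk0N⟩ / θ ⟨(k0 : ℕ) + 1, hk0N⟩ := by
    refine hstepstrict (k0 : ℕ) hk0N hk0lt ?_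
    have : (⟨(k0 : ℕ), hk0lt⟩ : Fin (N - 1)) = k0 := by ext; rfl
    rw [this]; exact hk0
  constructor
  · by_contra hcon
    push_neg at hcon
    -- θ_0 ≤ θ'_0, so r_0 ≥ 1, so r_k ≥ 1 everywhere, strict at k0+1
    have hr0 : 1 ≤ θ' ⟨0, by omega⟩ / θ ⟨0, by omega⟩ :=
      (one_le_div (hθpos _)).mpr hcon
    have hall : ∀ k : Fin N, θ k ≤ θ' k := by
      intro k
      have := hmono (k : ℕ) 0 k.isLt (by omega) (by omega)
      have h1 : 1 ≤ θ' ⟨(k : ℕ), k.isLt⟩ / θ ⟨(k : ℕ), k.isLt⟩ := le_trans hr0 this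
      have h2 := (one_le_div (hθpos ⟨(k : ℕ), k.isLt⟩)).mp h1
      simpa using h2
    have hsome : θ (⟨(k0 : ℕ) + 1, hk0N⟩ : Fin N) < θ' ⟨(k0 : ℕ) + 1, hk0N⟩ := by
      have h1 : 1 ≤ θ' ⟨(k0 : ℕ), by omega⟩ / θ ⟨(k0 : ℕ), by omega⟩ :=
        le_trans hr0 (hmono (k0 : ℕ) 0 (by omega) (by omega) (by omega))
      have h2 : 1 < θ' ⟨(k0 : ℕ) + 1, hk0N⟩ / θ ⟨(k0 : ℕ) + 1, hk0N⟩ :=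
        lt_of_le_of_lt h1 hk0strict
      exact (one_lt_div (hθpos _)).mp h2
    have : (∑ k, θ k) < ∑ k, θ' k :=
      Finset.sum_lt_sum (fun i _ => hall i) ⟨⟨(k0 : ℕ) + 1, hk0N⟩, Finset.mem_univ _, hsome⟩
    rw [hθsum, hθ'sum] at this
    exact lt_irrefl _ this
  · by_contra hcon
    push_neg at hcon
    have hlast : N - 1 < N := by omega
    have hrlast : θ' ⟨N - 1, hlast⟩ / θ ⟨N - 1, hlast⟩ ≤ 1 :=
      (div_le_one (hθpos _)).mpr hcon
    have hall : ∀ k : Fin N, θ' k ≤ θ k := by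
      intro k
      have := hmono (N - 1) (k : ℕ) hlast k.isLt (by omega)
      have h1 : θ' ⟨(k : ℕ), k.isLt⟩ / θ ⟨(k : ℕ), k.isLt⟩ ≤ 1 := le_trans this hrlast
      have h2 := (div_le_one (hθpos ⟨(k : ℕ), k.isLt⟩)).mp h1
      simpa using h2
    have hsome : θ' (⟨(k0 : ℕ), by omega⟩ : Fin N) < θ ⟨(k0 : ℕ), by omega⟩ := by
      have h1 : θ' ⟨(k0 : ℕ) + 1, hk0N⟩ / θ ⟨(k0 : ℕ) + 1, hk0N⟩ ≤ 1 :=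
        le_trans (hmono (N - 1) ((k0 : ℕ) + 1) hlast hk0N (by omega)) hrlast
      have h2 : θ' ⟨(k0 : ℕ), by omega⟩ / θ ⟨(k0 : ℕ), by omega⟩ < 1 :=
        lt_of_lt_of_le hk0strict h1
      exact (div_lt_one (hθpos _)).mp h2
    have : (∑ k, θ' k) < ∑ k, θ k :=
      Finset.sum_lt_sum (fun i _ => hall i) ⟨⟨(k0 : ℕ), by omega⟩, Finset.mem_univ _, hsome⟩
    rw [hθsum, hθ'sum] at this
    exact lt_irrefl _ this
end
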